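/- Let (𝒫, 𝓡) be a control problem satisfying CNMS and let P = ||𝒫 be the composed plant. For each requirement Rj ∈ 𝓡, the automaton P || Rj is controllable with respect to P: no uncontrollable event enabled by P after a string of P || Rj is disabled in P || Rj. -/

import Mathlib

open scoped Classical

/-- A finite-automaton-style structure: alphabet, partial transition
function, initial state, and marked states. -/
structure Aut (Q E : Type) where
  alph : Set E
  δ : Q → E → Option Q
  q0 : Q
  Qm : Set Q

namespace Aut

variable {Q Q1 Q2 E : Type}

/-- Extension of the partial transition function to strings. -/
def run (A : Aut Q E) : Q → List E → Option Q
  | q, [] => some q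
  | q, e :: s => (A.δ q e).bind fun q' => A.run q' s

/-- Generated language. -/
def Lang (A : Aut Q E) : Set (List E) := {s | (A.run A.q0 s).isSome}

/-- Marked language. -/
def LangM (A : Aut Q E) : Set (List E) := {s | ∃ q ∈ A.Qm, A.run A.q0 s = some q}

def Reachable (A : Aut Q E) (q : Q) : Prop := ∃ s, A.run A.q0 s = some q

def Coreachable (A : Aut Q E) (q : Q) : Prop :=
  ∃ s q', A.run q s = some q' ∧ q' ∈ A.Qm

def Trim (A : Aut Q E) : Prop := ∀ q, A.Reachable q ∧ A.Coreachable q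

def Nonblocking (A : Aut Q E) : Prop := ∀ q, A.Reachable q → A.Coreachable q

def StronglyConnected (A : Aut Q E) : Prop := ∀ q1 q2 : Q, ∃ s, A.run q1 s = some q2

/-- Synchronous composition of two automata. -/
noncomputable def sync (A : Aut Q1 E) (B : Aut Q2 E) : Aut (Q1 × Q2) E where
  alph := A.alph ∪ B.alph
  δ := fun p e =>
    if e ∈ A.alph ∧ e ∈ B.alph then
      match A.δ p.1 e, B.δ p.2 e with
      | some a, some b => some (a, b)
      | _, _ => none
    else if e ∈ A.alph then (A.δ p.1 e).map (fun a => (a, p.2))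
    else if e ∈ B.alph then (B.δ p.2 e).map (fun b => (p.1, b))
    else none
  q0 := (A.q0, B.q0)
  Qm := {p | p.1 ∈ A.Qm ∧ p.2 ∈ B.Qm}

end Aut

namespace Aut

/-- Synchronous composition of a product system (pairwise disjoint alphabets):
the shuffle automaton on the product state space. -/
noncomputable def shuffle {m : ℕ} {Q : Fin m → Type} {E : Type}
    (A : ∀ i, Aut (Q i) E) : Aut (∀ i, Q i) E where
  alph := ⋃ i, (A i).alph
  δ := fun q e =>
    if h : ∃ i, e ∈ (A i).alph then
      ((A h.choose).δ (q h.choose) e).map fun q' => Function.update q h.choose q'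
    else none
  q0 := fun i => (A i).q0
  Qm := {q | ∀ i, q i ∈ (A i).Qm}

end Aut

namespace Aut

/-- Synchronous composition of an automaton with a state-event invariant
expression `μ needs C`: transitions labeled `μ` are removed from states
where the condition `C` is false. -/
noncomputable def restrict {Q E : Type} (A : Aut Q E) (μ : E) (C : Q → Prop) :
    Aut Q E where
  alph := A.alph
  δ := fun q e => if e = μ ∧ ¬ C q then none else A.δ q e
  q0 := A.q0
  Qm := A.Qm

end Aut

/-- A literal: a (possibly negated) state reference `P_i.q`. -/
structure Lit (m : ℕ) (Q : Fin m → Type) where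
  i : Fin m
  q : Q i
  pos : Bool

/-- Evaluation of a literal at a global state. -/
def Lit.eval {m : ℕ} {Q : Fin m → Type} (l : Lit m Q) (r : ∀ i, Q i) : Prop :=
  if l.pos then r l.i = l.q else r l.i ≠ l.q

/-- A predicate in disjunctive normal form over state references. -/
abbrev DNF (m : ℕ) (Q : Fin m → Type) := List (List (Lit m Q))

/-- Evaluation of a DNF predicate at a global state. -/
def DNF.eval {m : ℕ} {Q : Fin m → Type} (C : DNF m Q) (r : ∀ i, Q i) : Prop :=
  ∃ conj ∈ C, ∀ l ∈ conj, l.eval r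

/-- `K` is controllable with respect to `G` (given uncontrollable events `Su`). -/
def Controllable {QK QG E : Type} (Su : Set E) (K : Aut QK E) (G : Aut QG E) : Prop :=
  ∀ (s : List E) (u : E), u ∈ Su → (K.run K.q0 s).isSome →
    (G.run G.q0 (s ++ [u])).isSome → (K.run K.q0 (s ++ [u])).isSome

/-- A control problem satisfying the CNMS properties. -/
structure CNMS (m : ℕ) (Q : Fin m → Type) (E : Type) where
  plant : ∀ i, Aut (Q i) E
  /-- controllable events -/
  Sc : Set E
  /-- uncontrollable events -/
  Su : Set E
  /-- the requirements: state-event invariant expressions `μ needs C` -/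
  reqs : List (E × DNF m Q)
  /-- controllable and uncontrollable events are disjoint -/
  part : ∀ e : E, ¬(e ∈ Sc ∧ e ∈ Su)
  /-- each alphabet consists of controllable and uncontrollable events -/
  events : ∀ i, (plant i).alph ⊆ Sc ∪ Su
  /-- Property 1: the plant is a product system (pairwise disjoint alphabets) -/
  disj : ∀ i j, i ≠ j → ∀ e, ¬(e ∈ (plant i).alph ∧ e ∈ (plant j).alph)
  /-- transitions are labeled only by events of the owning plant's alphabet -/
  dom : ∀ i q e, (plant i).δ q e ≠ none → e ∈ (plant i).alph
  /-- Property 2: each plant is strongly connected ... -/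
  sc : ∀ i, (plant i).StronglyConnected
  /-- ... with at least one marked state -/
  hasMarked : ∀ i, ∃ q, q ∈ (plant i).Qm
  /-- each restricted event belongs to some plant -/
  evIn : ∀ r ∈ reqs, ∃ i, r.1 ∈ (plant i).alph
  /-- Property 3.b: restricted events are controllable -/
  ctrl : ∀ r ∈ reqs, r.1 ∈ Sc
  /-- Property 3.c: at most one requirement per event -/
  uniq : ∀ r1 ∈ reqs, ∀ r2 ∈ reqs, r1.1 = r2.1 → r1 = r2
  /-- Property 3.e: each conjunction references each plant at most once -/
  once : ∀ r ∈ reqs, ∀ conj ∈ r.2, ∀ l1 ∈ conj, ∀ l2 ∈ conj, l1.i = l2.i → l1 = l2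
  /-- Property 3.f: no negated reference to a single-state plant -/
  nneg : ∀ r ∈ reqs, ∀ conj ∈ r.2, ∀ l ∈ conj, l.pos = false → ∃ a b : Q l.i, a ≠ b
  /-- Property 3.g: each plant referenced in a condition is a sensor automaton -/
  sens : ∀ r ∈ reqs, ∀ conj ∈ r.2, ∀ l ∈ conj, (plant l.i).alph ⊆ Su
  /-- each condition is a nonempty DNF -/
  condNe : ∀ r ∈ reqs, r.2 ≠ []

namespace CNMS

variable {m : ℕ} {Q : Fin m → Type} {E : Type}

/-- The composed (monolithic) plant `‖𝒫`. -/
noncomputable def plantComp (cp : CNMS m Q E) : Aut (∀ i, Q i) E :=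
  Aut.shuffle cp.plant

/-- `𝒫 ‖ 𝓡`: the plant composed with all requirements. -/
noncomputable def sup (cp : CNMS m Q E) : Aut (∀ i, Q i) E :=
  cp.reqs.foldl (fun A r => A.restrict r.1 (fun g => r.2.eval g)) cp.plantComp

end CNMS

namespace Aut

variable {Q E : Type}

theorem run_append (A : Aut Q E) (q : Q) (s t : List E) :
    A.run q (s ++ t) = (A.run q s).bind fun q' => A.run q' t := by
  induction s generalizing q with
  | nil => rfl
  | cons e s ih => simp only [List.cons_append, run, ih, Option.bind_assoc]

theorem restrict_δ_of_ne (A : Aut Q E) {μ e : E} (C : Q → Prop) (q : Q) (he : e ≠ μ) :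
    (A.restrict μ C).δ q e = A.δ q e :=
  if_neg fun h => he h.1

theorem δ_of_restrict_δ (A : Aut Q E) {μ e : E} {C : Q → Prop} {q q' : Q}
    (h : (A.restrict μ C).δ q e = some q') : A.δ q e = some q' := by
  change (if e = μ ∧ ¬C q then none else A.δ q e) = some q' at h
  split_ifs at h
  exact h

theorem run_of_restrict_run (A : Aut Q E) {μ : E} {C : Q → Prop} {q q' : Q} {s : List E}
    (h : (A.restrict μ C).run q s = some q') : A.run q s = some q' := by
  induction s generalizing q with
  | nil => exact h
  | cons e s ih =>
    obtain ⟨p, hp, hrun⟩ := Option.bind_eq_some_iff.mp h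
    simp only [run, A.δ_of_restrict_δ hp, Option.bind_some, ih hrun]

theorem controllable_restrict {Su : Set E} (A : Aut Q E) {μ : E} (C : Q → Prop)
    (hμ : μ ∉ Su) : Controllable Su (A.restrict μ C) A := by
  intro s u hu hs hsu
  obtain ⟨q, hq⟩ := Option.isSome_iff_exists.mp hs
  have hu_ne : u ≠ μ := by rintro rfl; exact hμ hu
  have hq_plant : A.run A.q0 s = some q := A.run_of_restrict_run hq
  rw [run_append] at hsu ⊢
  rw [hq_plant] at hsu
  rw [hq]
  simpa only [Option.bind_some, run, A.restrict_δ_of_ne C q hu_ne] using hsu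

end Aut

/-- for a CNMS control problem, `P ‖ Rj` is controllable with
respect to the composed plant `P = ‖𝒫` for every requirement `Rj`. -/
theorem cnms_controllable {m : ℕ} {Q : Fin m → Type} {E : Type}
    (cp : CNMS m Q E) (r : E × DNF m Q) (hr : r ∈ cp.reqs) :
    Controllable cp.Su
      (cp.plantComp.restrict r.1 (fun g => r.2.eval g)) cp.plantComp :=
  cp.plantComp.controllable_restrict _ fun hu => cp.part r.1 ⟨cp.ctrl r hr, hu⟩
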